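/- Let I be a finite subset of [0,1] with 0, 1 ∈ I, write I⁺ = I \ {0}, and let F : ℕ → [0,1] be a fuzzy subset of ℕ taking all its values in I. Then the following are equivalent: (i) there exist a nonempty finite alphabet Σ and a fuzzy language L : Σ* → [0,1] taking all its values in I, all of whose t-levels {w ∈ Σ* : L(w) ≥ t} with t ∈ (0,1] are recursively enumerable, such that F(n) = sup { L(w) : w ∈ Σ*, |w| = n } for every n ∈ ℕ; (ii) for every t ∈ I⁺, the t-level {n ∈ ℕ : F(n) ≥ t} is a recursively enumerable subset of ℕ. -/

import Mathlib

/-!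
Since `L` takes its values in the finite set `I`, the supremum over the words of length `n` is
attained, so `t ≤ F n` iff some word of length `n` lies in the `t`-level of `L`: the `t`-level of
`F` is the image of that of `L` under `List.length`, and r.e. predicates are closed under
computable images (search over pairs of a witness and a halting time). Conversely `F` is induced by
`L w := F |w|` over a one-letter alphabet; as `F` is `I`-valued, its `t`-level is its `s`-level for
the least `s ∈ I` with `t ≤ s`, and r.e. predicates are closed under computable preimages.
-/

open Nat.Partrec Code Encodable

theorem Nat.Partrec.Code.eval_dom_iff_exists_evaln_isSome {c : Code} {n : ℕ} :
    (eval c n).Dom ↔ ∃ k, (evaln k c n).isSome := by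
  simp only [Part.dom_iff_mem, evaln_complete, Option.isSome_iff_exists, Option.mem_def]
  exact exists_comm

section
variable {α : Type*} [Primcodable α] {p : α → Prop}

theorem REPred.exists_computable_witness (hp : REPred p) :
    ∃ q : α → ℕ → Bool, Computable₂ q ∧ ∀ a, p a ↔ ∃ s, q a s = true := by
  obtain ⟨c, hc⟩ := Code.exists_code.1 hp
  refine ⟨fun a s => (evaln s c (encode a)).isSome,
    Primrec.option_isSome.to_comp.comp <| primrec_evaln.to_comp.comp <|
      ((Computable.snd.pair (Computable.const c)).pair (Computable.encode.comp Computable.fst)),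
    fun a => ?_⟩
  rw [← eval_dom_iff_exists_evaln_isSome, hc]
  simp [encodek, Part.assert]

theorem REPred.of_computable_witness {q : α → ℕ → Bool} (hq : Computable₂ q) :
    REPred fun a => ∃ s, q a s = true :=
  (Partrec.rfind hq.partrec₂).dom_re.of_eq fun a => by
    simp [Nat.rfind_dom]

theorem REPred.image {β : Type*} [Primcodable β] (hp : REPred p) {f : α → β}
    (hf : Computable f) : REPred fun b => ∃ a, f a = b ∧ p a := by
  obtain ⟨q, hq, hpq⟩ := hp.exists_computable_witness
  -- `m` codes a candidate preimage together with a halting time; comparing encodings avoids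
  -- needing `DecidableEq β`.
  let r : β → ℕ → Bool := fun b m => ((decode (α := α) m.unpair.1).map
    fun a => decide (encode (f a) = encode b) && q a m.unpair.2).getD false
  have hr : Computable₂ r := by
    have hm₁ : Computable fun x : β × ℕ => x.2.unpair.1 :=
      Computable.fst.comp (Computable.unpair.comp Computable.snd)
    have hm₂ : Computable fun x : β × ℕ => x.2.unpair.2 :=
      Computable.snd.comp (Computable.unpair.comp Computable.snd)
    have hdec : Computable fun x : β × ℕ => decode (α := α) x.2.unpair.1 :=
      Computable.decode.comp hm₁
    have heq : Computable₂ fun (x : β × ℕ) (a : α) => decide (encode (f a) = encode x.1) :=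
      Primrec.eq.decide.to_comp.comp (Computable.encode.comp (hf.comp Computable.snd))
        (Computable.encode.comp (Computable.fst.comp Computable.fst))
    have hqa : Computable₂ fun (x : β × ℕ) (a : α) => q a x.2.unpair.2 :=
      hq.comp Computable.snd (hm₂.comp Computable.fst)
    exact (Computable.option_getD (Computable.option_map hdec
      (Primrec.and.to_comp.comp heq hqa).to₂) (Computable.const false)).to₂
  refine (REPred.of_computable_witness hr).of_eq fun b => ⟨?_, ?_⟩
  · rintro ⟨m, hm⟩
    cases ha : decode (α := α) m.unpair.1 with
    | none => simp [r, ha] at hm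
    | some a =>
      simp only [r, ha, Option.map_some, Option.getD_some, Bool.and_eq_true, decide_eq_true_eq,
        encode_inj] at hm
      exact ⟨a, hm.1, (hpq a).2 ⟨_, hm.2⟩⟩
  · rintro ⟨a, rfl, ha⟩
    obtain ⟨s, hs⟩ := (hpq a).1 ha
    exact ⟨Nat.pair (encode a) s, by simp [r, encodek, hs]⟩

theorem REPred.comp {β : Type*} [Primcodable β] {p : β → Prop} (hp : REPred p) {f : α → β}
    (hf : Computable f) : REPred fun a => p (f a) :=
  Partrec.comp hp hf

end

theorem Set.Finite.le_csSup_iff {α : Type*} [ConditionallyCompleteLinearOrder α] {s : Set α}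
    {a : α} (hs : s.Finite) (h : s.Nonempty) : a ≤ sSup s ↔ ∃ x ∈ s, a ≤ x := by
  simpa using (hs.csSup_lt_iff h).not

theorem Set.Finite.exists_mem_forall_le_iff {α : Type*} [LinearOrder α] {s : Set α}
    (hs : s.Finite) {t : α} (ht : ∃ x ∈ s, t ≤ x) :
    ∃ m ∈ s, t ≤ m ∧ ∀ x ∈ s, t ≤ x ↔ m ≤ x := by
  obtain ⟨m, ⟨hms, htm⟩, hmin⟩ :=
    (s ∩ Set.Ici t).exists_min_image id (hs.inter_of_left _) (by simpa [Set.Nonempty] using ht)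
  exact ⟨m, hms, htm, fun x hx => ⟨fun htx => hmin x ⟨hx, htx⟩, htm.trans⟩⟩

theorem stmt_6_general (I : Set ℝ) (hIfin : I.Finite) (hI : I ⊆ Set.Icc (0:ℝ) 1)
    (h1 : (1:ℝ) ∈ I)
    (F : ℕ → ℝ) (hF : ∀ n, F n ∈ I) :
    (∃ k : ℕ, 0 < k ∧ ∃ L : List (Fin k) → ℝ,
        (∀ w, L w ∈ I) ∧
        (∀ t : ℝ, 0 < t → t ≤ 1 → REPred (fun w : List (Fin k) => t ≤ L w)) ∧
        (∀ n : ℕ, F n = sSup {r : ℝ | ∃ w : List (Fin k), w.length = n ∧ L w = r}))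
      ↔ (∀ t ∈ I \ {0}, REPred (fun n : ℕ => t ≤ F n)) := by
  constructor
  · rintro ⟨k, hk, L, hLI, hLre, hsup⟩ t ⟨htI, ht0⟩
    have ht : 0 < t := (hI htI).1.lt_of_ne' ht0
    refine ((hLre t ht (hI htI).2).image Computable.list_length).of_eq fun n => ?_
    have hfin : {r | ∃ w : List (Fin k), w.length = n ∧ L w = r}.Finite :=
      hIfin.subset (by rintro _ ⟨w, -, rfl⟩; exact hLI w)
    have hne : {r | ∃ w : List (Fin k), w.length = n ∧ L w = r}.Nonempty :=
      ⟨_, List.replicate n ⟨0, hk⟩, List.length_replicate, rfl⟩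
    rw [hsup n, hfin.le_csSup_iff hne]
    simp
  · intro hF_re
    refine ⟨1, one_pos, fun w => F w.length, fun w => hF _, fun t ht0 ht1 => ?_, fun n => ?_⟩
    · obtain ⟨s, hsI, hts, hlevel⟩ := hIfin.exists_mem_forall_le_iff ⟨1, h1, ht1⟩
      exact ((hF_re s ⟨hsI, (ht0.trans_le hts).ne'⟩).comp Computable.list_length).of_eq
        fun w => (hlevel _ (hF _)).symm
    · have hfibre : {r | ∃ w : List (Fin 1), w.length = n ∧ F w.length = r} = {F n} :=
        Set.ext fun r => ⟨by rintro ⟨w, rfl, rfl⟩; rfl,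
          by rintro rfl; exact ⟨List.replicate n 0, List.length_replicate, by simp⟩⟩
      rw [hfibre, csSup_singleton]

/-- Proposition 2: an I-valued fuzzy subset F of ℕ is recursively enumerable
(i.e., arises as F(n) = sup {L(w) : |w| = n} for some recursively enumerable
I-valued fuzzy language L over some nonempty finite alphabet) if and only if
every t-level of F with t ∈ I⁺ is a recursively enumerable subset of ℕ. -/
theorem stmt_6 (I : Set ℝ) (hIfin : I.Finite) (hI : I ⊆ Set.Icc (0:ℝ) 1)
    (h0 : (0:ℝ) ∈ I) (h1 : (1:ℝ) ∈ I)
    (F : ℕ → ℝ) (hF : ∀ n, F n ∈ I) :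
    (∃ k : ℕ, 0 < k ∧ ∃ L : List (Fin k) → ℝ,
        (∀ w, L w ∈ I) ∧
        (∀ t : ℝ, 0 < t → t ≤ 1 → REPred (fun w : List (Fin k) => t ≤ L w)) ∧
        (∀ n : ℕ, F n = sSup {r : ℝ | ∃ w : List (Fin k), w.length = n ∧ L w = r}))
      ↔ (∀ t ∈ I \ {0}, REPred (fun n : ℕ => t ≤ F n)) :=
  stmt_6_general I hIfin hI h1 F hF
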